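/- arXiv:math/0209215 — 2 statements merged into one kernel-verified Lean document; each statement's English description precedes it below -/
import Mathlib

section
/- Let R be a commutative ring. In the category Ch(R) of unbounded chain complexes of R-modules, the class of morphisms that are simultaneously monomorphisms and quasi-isomorphisms is stable under pushout: if f : A → B is a monomorphism and a quasi-isomorphism and g : A → C is any morphism, then the cobase change C → B ⊔_A C of f along g is again a monomorphism and a quasi-isomorphism. -/
/-!
For a monomorphism `f`, the long exact homology sequence of `0 → A → B → coker f → 0` shows that
`f` is a quasi-isomorphism exactly when `coker f` is acyclic. In a pushout square the cokernels of
the two parallel sides agree, and in an abelian category monomorphisms are stable under pushout.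
-/

open CategoryTheory Limits

namespace CategoryTheory.ShortComplex

variable {C : Type*} [Category C] [Abelian C]

lemma shortExact_cokernelSequence {X Y : C} (f : X ⟶ Y) [Mono f] :
    (cokernelSequence f).ShortExact :=
  .mk' (cokernelSequence_exact f) ‹_› inferInstance

lemma ShortExact.quasiIso_f_of_acyclic_X₃ {ι : Type*} {c : ComplexShape ι}
    {S : ShortComplex (HomologicalComplex C c)} (hS : S.ShortExact) (h₃ : S.X₃.Acyclic) :
    _root_.QuasiIso S.f := by
  rw [_root_.quasiIso_iff]
  intro i
  rw [quasiIsoAt_iff_isIso_homologyMap]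
  have h₃ : ∀ j, IsZero (S.X₃.homology j) := fun j ↦ (h₃ j).isZero_homology
  have : Epi (HomologicalComplex.homologyMap S.f i) :=
    (hS.homology_exact₂ i).epi_f ((h₃ i).eq_of_tgt _ _)
  have : Mono (HomologicalComplex.homologyMap S.f i) := by
    by_cases! hi : ∃ j, c.Rel j i
    · obtain ⟨j, hji⟩ := hi
      exact (hS.homology_exact₁ j i hji).mono_g ((h₃ j).eq_of_src _ _)
    · have := hS.mono_f
      exact HomologicalComplex.mono_homologyMap_of_mono_of_not_rel S.f i hi
  exact isIso_of_mono_of_epi _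

end CategoryTheory.ShortComplex

namespace HomologicalComplex

variable {C : Type*} [Category C] [Abelian C] {ι : Type*} {c : ComplexShape ι}
  {K L M : HomologicalComplex C c}

lemma quasiIso_iff_acyclic_cokernel (f : K ⟶ L) [Mono f] :
    QuasiIso f ↔ (cokernel f).Acyclic :=
  ⟨(ShortComplex.shortExact_cokernelSequence f).acyclic_X₃,
    (ShortComplex.shortExact_cokernelSequence f).quasiIso_f_of_acyclic_X₃⟩

noncomputable def cokernelPushoutInrIso (f : K ⟶ L) (g : K ⟶ M) :
    cokernel f ≅ cokernel (pushout.inr f g) :=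
  have := isIso_cokernel_map_of_isPushout (IsPushout.of_hasPushout f g)
  asIso (cokernel.map _ _ _ _ (IsPushout.of_hasPushout f g).w)

lemma quasiIso_pushout_inr (f : K ⟶ L) (g : K ⟶ M) [Mono f] [QuasiIso f] :
    QuasiIso (pushout.inr f g) := by
  have : Mono (pushout.inr f g) := Abelian.mono_pushout_of_mono_f f g
  have hf : (cokernel f).Acyclic := (quasiIso_iff_acyclic_cokernel f).mp ‹_›
  exact (quasiIso_iff_acyclic_cokernel _).mpr fun i ↦ (hf i).of_iso (cokernelPushoutInrIso f g)

end HomologicalComplex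

/-- In the category `Ch(R)` of unbounded chain complexes of
`R`-modules, morphisms which are simultaneously monomorphisms and
quasi-isomorphisms are stable under pushout: if `f : A ⟶ B` is a mono and a
quasi-isomorphism, and `g : A ⟶ C` is arbitrary, then the cobase change
`C ⟶ B ⊔_A C` of `f` along `g` is again a mono and a quasi-isomorphism. -/
theorem mono_quasiIso_stable_under_cobaseChange
    (R : Type) [CommRing R]
    {A B C : HomologicalComplex (ModuleCat R) (ComplexShape.down ℤ)}
    (f : A ⟶ B) (g : A ⟶ C) (hmono : Mono f) (hq : QuasiIso f) :
    Mono (pushout.inr f g) ∧ QuasiIso (pushout.inr f g) :=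
  ⟨Abelian.mono_pushout_of_mono_f f g, HomologicalComplex.quasiIso_pushout_inr f g⟩
end

section
/- Let R be a commutative ring. In the category Ch(R) of unbounded chain complexes of R-modules, the class of morphisms that are simultaneously monomorphisms and quasi-isomorphisms is stable under transfinite composition: for any well-ordered diagram X : J ⥤ Ch(R) that is continuous at limit stages, if every successor map X_j → X_{j+1} is a monomorphism and a quasi-isomorphism, then the transfinite composite X_⊥ → colim_J X is a monomorphism and a quasi-isomorphism. -/
open CategoryTheory Limits

section

variable {C : Type*} [Category C] {J : Type*} [LinearOrder J]

/-- The restriction of a diagram `X : J ⥤ C` to the stages strictly below `j`. -/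
def restrictionLT (X : J ⥤ C) (j : J) : Set.Iio j ⥤ C :=
  (Subtype.mono_coe _).functor ⋙ X

/-- The natural cocone on the restriction of `X` to the stages strictly below
`j`, with apex `X.obj j`. -/
@[simps]
def coconeLT (X : J ⥤ C) (j : J) : Cocone (restrictionLT X j) where
  pt := X.obj j
  ι :=
    { app := fun k => X.map (homOfLE k.2.le)
      naturality := fun k₁ k₂ φ => by
        dsimp [restrictionLT]
        rw [Category.comp_id]
        exact (X.map_comp _ _).symm }

end

/-!
`Ch(R)` is a Grothendieck abelian category, and in such a category monomorphisms are stable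
under transfinite composition. For quasi-isomorphisms it suffices, as for any multiplicative
class, that they are stable under filtered colimits. A colimit of complexes is computed
degreewise, that is, by applying `colim : (K ⥤ C) ⥤ C` to the corresponding complex in
`K ⥤ C`; filtered colimits of modules are exact, so `colim` preserves homology and hence
quasi-isomorphisms.
-/

universe w w'

open MorphismProperty

namespace HomologicalComplex

variable {C : Type*} [Category C] {ι : Type*} {c : ComplexShape ι} {K : Type*} [Category K]

def functorToComplexToComplexOfFunctors [HasZeroMorphisms C] :
    (K ⥤ HomologicalComplex C c) ⥤ HomologicalComplex (K ⥤ C) c where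
  obj X :=
    { X i := X ⋙ eval C c i
      d i j :=
        { app k := (X.obj k).d i j
          naturality _ _ g := (X.map g).comm i j }
      shape i j h := by ext k; exact (X.obj k).shape i j h
      d_comp_d' i j l _ _ := by ext k; exact (X.obj k).d_comp_d i j l }
  map f :=
    { f i := Functor.whiskerRight f (eval C c i)
      comm' i j _ := by ext k; exact (f.app k).comm i j }

instance quasiIso_functorToComplexToComplexOfFunctors_map [Abelian C]
    {X Y : K ⥤ HomologicalComplex C c} (f : X ⟶ Y) [∀ k, QuasiIso (f.app k)] :
    QuasiIso (functorToComplexToComplexOfFunctors.map f) := by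
  rw [quasiIso_iff_evaluation]
  exact fun k => inferInstanceAs (QuasiIso (f.app k))

section Colimits

variable [HasZeroMorphisms C] [HasColimitsOfShape K C] {X Y : K ⥤ HomologicalComplex C c}

/-- `(coconeOfHasColimitEval X).pt` is definitionally `(colim.mapHomologicalComplex c).obj _`:
this map is `colim` applied degreewise. -/
noncomputable def coconeOfHasColimitEvalMap (f : X ⟶ Y) :
    (coconeOfHasColimitEval X).pt ⟶ (coconeOfHasColimitEval Y).pt :=
  (colim.mapHomologicalComplex c).map (functorToComplexToComplexOfFunctors.map f)

lemma coconeOfHasColimitEval_ι_app_comp_map (f : X ⟶ Y) (k : K) :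
    (coconeOfHasColimitEval X).ι.app k ≫ coconeOfHasColimitEvalMap f =
      f.app k ≫ (coconeOfHasColimitEval Y).ι.app k := by
  ext n
  exact ι_colimMap _ k

end Colimits

section ExactColimits

variable [Abelian C] [HasColimitsOfShape K C] [HasExactColimitsOfShape K C]

instance quasiIso_coconeOfHasColimitEvalMap {X Y : K ⥤ HomologicalComplex C c} (f : X ⟶ Y)
    [∀ k, QuasiIso (f.app k)] : QuasiIso (coconeOfHasColimitEvalMap f) :=
  inferInstanceAs (QuasiIso ((colim.mapHomologicalComplex c).map _))

instance isStableUnderColimitsOfShape_quasiIso :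
    (quasiIso C c).IsStableUnderColimitsOfShape K where
  condition X₁ X₂ c₁ c₂ h₁ h₂ f hf φ hφ := by
    have : ∀ k, QuasiIso (f.app k) := hf
    let e₁ := (isColimitCoconeOfHasColimitEval X₁).coconePointUniqueUpToIso h₁
    let e₂ := (isColimitCoconeOfHasColimitEval X₂).coconePointUniqueUpToIso h₂
    have w : e₁.hom ≫ φ = coconeOfHasColimitEvalMap f ≫ e₂.hom :=
      (isColimitCoconeOfHasColimitEval X₁).hom_ext fun k => by
        rw [reassoc_of% coconeOfHasColimitEval_ι_app_comp_map,
          IsColimit.comp_coconePointUniqueUpToIso_hom,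
          IsColimit.comp_coconePointUniqueUpToIso_hom_assoc, hφ]
    have hψ : QuasiIso (coconeOfHasColimitEvalMap f) := inferInstance
    exact (quasiIso_iff_of_arrow_mk_iso _ _ (Arrow.isoMk e₁ e₂ w)).1 hψ

end ExactColimits

instance isStableUnderFilteredColimits_quasiIso [Abelian C]
    [HasFilteredColimitsOfSize.{w, w'} C] [AB5OfSize.{w, w'} C] :
    IsStableUnderFilteredColimits.{w, w'} (quasiIso C c) where
  isStableUnderColimitsOfShape _ _ _ := inferInstance

end HomologicalComplex

namespace CategoryTheory.MorphismProperty

lemma colimit_ι_bot_mem {C : Type*} [Category C] (W : MorphismProperty C)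
    {J : Type w} [LinearOrder J] [OrderBot J] [SuccOrder J] [WellFoundedLT J]
    [W.IsStableUnderTransfiniteCompositionOfShape J]
    (X : J ⥤ C) [X.IsWellOrderContinuous] [HasColimit X]
    (hX : ∀ j, ¬IsMax j → W (X.map (homOfLE (Order.le_succ j)))) :
    W (colimit.ι X ⊥) :=
  transfiniteCompositionsOfShape_le W J _
    ⟨{ F := X
       isoBot := Iso.refl _
       incl := (colimit.cocone X).ι
       isColimit := colimit.isColimit X
       map_mem := hX }⟩

end CategoryTheory.MorphismProperty

/-- In `Ch(R)`, morphisms which are simultaneously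
monomorphisms and quasi-isomorphisms are stable under transfinite composition:
for a well-ordered continuous diagram `X : J ⥤ Ch(R)` all of whose successor
maps are monomorphisms and quasi-isomorphisms, the transfinite composite
`X_⊥ ⟶ colim_J X` is a monomorphism and a quasi-isomorphism. -/
theorem mono_quasiIso_stable_under_transfinite_composition
    (R : Type) [CommRing R]
    (J : Type) [LinearOrder J] [OrderBot J] [SuccOrder J] [WellFoundedLT J]
    (X : J ⥤ HomologicalComplex (ModuleCat R) (ComplexShape.down ℤ))
    (hsucc : ∀ j : J, ¬ IsMax j →
      Mono (X.map (homOfLE (Order.le_succ j))) ∧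
        QuasiIso (X.map (homOfLE (Order.le_succ j))))
    (hcont : ∀ j : J, Order.IsSuccLimit j → Nonempty (IsColimit (coconeLT X j))) :
    Mono (colimit.ι X ⊥) ∧ QuasiIso (colimit.ι X ⊥) := by
  -- `coconeLT X j` is definitionally Mathlib's `(Set.principalSegIio j).cocone X`
  have : X.IsWellOrderContinuous := ⟨hcont⟩
  exact ⟨(monomorphisms _).colimit_ι_bot_mem X fun j hj => (hsucc j hj).1,
    (HomologicalComplex.quasiIso _ _).colimit_ι_bot_mem X fun j hj => (hsucc j hj).2⟩
end
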